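/- arXiv:2006.08055 — 11 statements merged into one kernel-verified Lean document; each statement's English description precedes it below -/
import Mathlib

section
/- For finite disjoint sets C and C' of products, the BundleMVL-2 expected revenue satisfies R(C ∪ C') = α·R(C) + (1−α)·T(C,C'), where α = (v₀ + Σ_{i∈C}Σ_{j∈C} θ_{ij}) / (v₀ + Σ_{i∈C∪C'}Σ_{j∈C∪C'} θ_{ij}) lies in [0,1], and T(C,C') = (Σ_{i∈C'}Σ_{j∈C'} r̂_{ij}θ_{ij} + 2Σ_{i∈C}Σ_{j∈C'} r̂_{ij}θ_{ij}) / (Σ_{i∈C'}Σ_{j∈C'} θ_{ij} + 2Σ_{i∈C}Σ_{j∈C'} θ_{ij}). -/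
open Finset

/-! Splitting the double sums over `C ∪ C'` into the `C × C` block, the `C' × C'` block and the
two cross blocks (equal by symmetry) turns `R (C ∪ C')` into the mediant of `R C` and `T(C, C')`,
and a mediant is the convex combination of the two ratios weighted by their denominators. -/

theorem Finset.sum_sum_union_of_symm {ι R : Type*} [DecidableEq ι] [NonAssocSemiring R]
    {s t : Finset ι} (hst : Disjoint s t) {f : ι → ι → R} (hf : ∀ i j, f i j = f j i) :
    ∑ i ∈ s ∪ t, ∑ j ∈ s ∪ t, f i j =
      ∑ i ∈ s, ∑ j ∈ s, f i j + (∑ i ∈ t, ∑ j ∈ t, f i j + 2 * ∑ i ∈ s, ∑ j ∈ t, f i j) := by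
  have hcross : ∑ i ∈ t, ∑ j ∈ s, f i j = ∑ i ∈ s, ∑ j ∈ t, f i j := by
    rw [Finset.sum_comm]
    simp_rw [hf]
  simp_rw [Finset.sum_union hst, Finset.sum_add_distrib, hcross, two_mul]
  abel

theorem add_div_add_eq_convex_comb {K : Type*} [Field K] {a b c d : K}
    (hc : c ≠ 0) (hd : d ≠ 0) (hcd : c + d ≠ 0) :
    (a + b) / (c + d) = c / (c + d) * (a / c) + (1 - c / (c + d)) * (b / d) := by
  field_simp
  ring

theorem bundle_revenue_decomposition_general {ι : Type*} [DecidableEq ι]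
    (r : ι → ℝ) (θ : ι → ι → ℝ) (v0 : ℝ)
    (hv0 : 0 < v0)
    (hθsymm : ∀ i j, θ i j = θ j i)
    (hθnn : ∀ i j, 0 ≤ θ i j)
    (rhat : ι → ι → ℝ)
    (hrhat : ∀ i j, rhat i j = if i = j then r i else r i + r j)
    (R : Finset ι → ℝ)
    (hR : ∀ C, R C = (∑ i ∈ C, ∑ j ∈ C, rhat i j * θ i j) /
        (v0 + ∑ i ∈ C, ∑ j ∈ C, θ i j))
    (C C' : Finset ι) (hdisj : Disjoint C C')
    (hTden : (∑ i ∈ C', ∑ j ∈ C', θ i j) + 2 * ∑ i ∈ C, ∑ j ∈ C', θ i j ≠ 0) :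
    0 ≤ (v0 + ∑ i ∈ C, ∑ j ∈ C, θ i j) / (v0 + ∑ i ∈ C ∪ C', ∑ j ∈ C ∪ C', θ i j) ∧
    (v0 + ∑ i ∈ C, ∑ j ∈ C, θ i j) / (v0 + ∑ i ∈ C ∪ C', ∑ j ∈ C ∪ C', θ i j) ≤ 1 ∧
    R (C ∪ C') =
      ((v0 + ∑ i ∈ C, ∑ j ∈ C, θ i j) / (v0 + ∑ i ∈ C ∪ C', ∑ j ∈ C ∪ C', θ i j)) * R C +
      (1 - (v0 + ∑ i ∈ C, ∑ j ∈ C, θ i j) / (v0 + ∑ i ∈ C ∪ C', ∑ j ∈ C ∪ C', θ i j)) *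
        (((∑ i ∈ C', ∑ j ∈ C', rhat i j * θ i j) + 2 * ∑ i ∈ C, ∑ j ∈ C', rhat i j * θ i j) /
         ((∑ i ∈ C', ∑ j ∈ C', θ i j) + 2 * ∑ i ∈ C, ∑ j ∈ C', θ i j)) := by
  have hrθ_symm : ∀ i j, rhat i j * θ i j = rhat j i * θ j i := by
    intro i j
    by_cases h : i = j
    · subst h; rfl
    · rw [hrhat, hrhat, if_neg h, if_neg (Ne.symm h), add_comm, hθsymm]
  have hθ_nonneg : ∀ s t : Finset ι, 0 ≤ ∑ i ∈ s, ∑ j ∈ t, θ i j := fun s t =>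
    sum_nonneg fun i _ => sum_nonneg fun j _ => hθnn i j
  have hC_pos : 0 < v0 + ∑ i ∈ C, ∑ j ∈ C, θ i j := by linarith [hθ_nonneg C C]
  have hC'_nonneg : 0 ≤ ∑ i ∈ C', ∑ j ∈ C', θ i j + 2 * ∑ i ∈ C, ∑ j ∈ C', θ i j := by
    linarith [hθ_nonneg C' C', hθ_nonneg C C']
  rw [hR, hR, Finset.sum_sum_union_of_symm hdisj hθsymm,
    Finset.sum_sum_union_of_symm hdisj hrθ_symm, ← add_assoc v0]
  refine ⟨by positivity, div_le_one_of_le₀ (by linarith) (by positivity), ?_⟩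
  exact add_div_add_eq_convex_comb hC_pos.ne' hTden (by positivity)

/-- BundleMVL-2 revenue decomposition: R(C ∪ C') = α·R(C) + (1−α)·T(C,C') with α ∈ [0,1]. -/
theorem bundle_revenue_decomposition {ι : Type*} [DecidableEq ι]
    (W : Finset ι) (r : ι → ℝ) (θ : ι → ι → ℝ) (v0 : ℝ)
    (hv0 : 0 < v0)
    (hr : ∀ i ∈ W, 0 < r i)
    (hθsymm : ∀ i j, θ i j = θ j i)
    (hθnn : ∀ i j, 0 ≤ θ i j)
    (hθdiag : ∀ i ∈ W, 0 < θ i i)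
    (rhat : ι → ι → ℝ)
    (hrhat : ∀ i j, rhat i j = if i = j then r i else r i + r j)
    (R : Finset ι → ℝ)
    (hR : ∀ C, R C = (∑ i ∈ C, ∑ j ∈ C, rhat i j * θ i j) /
        (v0 + ∑ i ∈ C, ∑ j ∈ C, θ i j))
    (C C' : Finset ι) (hC : C ⊆ W) (hC' : C' ⊆ W) (hdisj : Disjoint C C')
    (hTden : (∑ i ∈ C', ∑ j ∈ C', θ i j) + 2 * ∑ i ∈ C, ∑ j ∈ C', θ i j ≠ 0) :
    0 ≤ (v0 + ∑ i ∈ C, ∑ j ∈ C, θ i j) / (v0 + ∑ i ∈ C ∪ C', ∑ j ∈ C ∪ C', θ i j) ∧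
    (v0 + ∑ i ∈ C, ∑ j ∈ C, θ i j) / (v0 + ∑ i ∈ C ∪ C', ∑ j ∈ C ∪ C', θ i j) ≤ 1 ∧
    R (C ∪ C') =
      ((v0 + ∑ i ∈ C, ∑ j ∈ C, θ i j) / (v0 + ∑ i ∈ C ∪ C', ∑ j ∈ C ∪ C', θ i j)) * R C +
      (1 - (v0 + ∑ i ∈ C, ∑ j ∈ C, θ i j) / (v0 + ∑ i ∈ C ∪ C', ∑ j ∈ C ∪ C', θ i j)) *
        (((∑ i ∈ C', ∑ j ∈ C', rhat i j * θ i j) + 2 * ∑ i ∈ C, ∑ j ∈ C', rhat i j * θ i j) /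
         ((∑ i ∈ C', ∑ j ∈ C', θ i j) + 2 * ∑ i ∈ C, ∑ j ∈ C', θ i j)) :=
  bundle_revenue_decomposition_general r θ v0 hv0 hθsymm hθnn rhat hrhat R hR C C' hdisj hTden
end

section
/- Let C* be a set maximizing the BundleMVL-2 expected revenue R over all subsets of W. Then every product i ∈ W with r_i > R(C*) belongs to C*; equivalently, any product not in C* has revenue at most R(C*). -/
open Finset

/-- Every product with revenue exceeding the optimal revenue belongs to the optimal set;
equivalently, products outside the optimal set have revenue at most the optimal revenue. -/
theorem high_revenue_products_in_optimal_set {ι : Type*} [DecidableEq ι]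
    (W : Finset ι) (r : ι → ℝ) (θ : ι → ι → ℝ) (v0 : ℝ)
    (hv0 : 0 < v0)
    (hr : ∀ i ∈ W, 0 < r i)
    (hθsymm : ∀ i j, θ i j = θ j i)
    (hθnn : ∀ i j, 0 ≤ θ i j)
    (hθdiag : ∀ i ∈ W, 0 < θ i i)
    (rhat : ι → ι → ℝ)
    (hrhat : ∀ i j, rhat i j = if i = j then r i else r i + r j)
    (R : Finset ι → ℝ)
    (hR : ∀ C, R C = (∑ i ∈ C, ∑ j ∈ C, rhat i j * θ i j) /
        (v0 + ∑ i ∈ C, ∑ j ∈ C, θ i j))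
    (Cs : Finset ι) (hCs : Cs ⊆ W)
    (hmax : ∀ C ⊆ W, R C ≤ R Cs) :
    (∀ i ∈ W, r i > R Cs → i ∈ Cs) ∧ (∀ i ∈ W, i ∉ Cs → r i ≤ R Cs) := by
  have key : ∀ i ∈ W, r i > R Cs → i ∈ Cs := by
    intro i hiW hri
    by_contra hiC
    have hexp : ∀ f : ι → ι → ℝ,
        ∑ a ∈ insert i Cs, ∑ b ∈ insert i Cs, f a b
          = f i i + ∑ b ∈ Cs, f i b + ∑ a ∈ Cs, f a i
            + ∑ a ∈ Cs, ∑ b ∈ Cs, f a b := by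
      intro f
      rw [Finset.sum_insert hiC, Finset.sum_insert hiC]
      simp_rw [Finset.sum_insert hiC, Finset.sum_add_distrib]
      ring
    set A : ℝ := ∑ a ∈ Cs, ∑ b ∈ Cs, rhat a b * θ a b with hA
    set B : ℝ := ∑ a ∈ Cs, ∑ b ∈ Cs, θ a b with hB
    have hBnn : 0 ≤ B := Finset.sum_nonneg fun a _ =>
      Finset.sum_nonneg fun b _ => hθnn a b
    have hD : 0 < v0 + B := by linarith
    -- rewrite cross sums using symmetry
    have hsym1 : ∑ a ∈ Cs, θ a i = ∑ a ∈ Cs, θ i a :=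
      Finset.sum_congr rfl fun a _ => hθsymm a i
    have hsym2 : ∑ a ∈ Cs, rhat a i * θ a i = ∑ a ∈ Cs, rhat i a * θ i a := by
      refine Finset.sum_congr rfl fun a ha => ?_
      have hai : a ≠ i := fun h => hiC (h ▸ ha)
      rw [hrhat, hrhat, hθsymm a i, if_neg hai, if_neg hai.symm]
      ring
    have hRCs : R Cs = A / (v0 + B) := by rw [hR]
    have hriD : A < r i * (v0 + B) := by
      have := hri
      rw [hRCs] at this
      calc A = (A / (v0 + B)) * (v0 + B) := by field_simp
        _ < r i * (v0 + B) := by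
            exact mul_lt_mul_of_pos_right this hD
    -- the new set
    have hnum : ∑ a ∈ insert i Cs, ∑ b ∈ insert i Cs, rhat a b * θ a b
        = r i * θ i i + 2 * ∑ a ∈ Cs, rhat i a * θ i a + A := by
      rw [hexp (fun a b => rhat a b * θ a b), hsym2, hrhat i i, if_pos rfl]
      ring
    have hden : v0 + ∑ a ∈ insert i Cs, ∑ b ∈ insert i Cs, θ a b
        = (v0 + B) + (θ i i + 2 * ∑ a ∈ Cs, θ i a) := by
      rw [hexp θ, hsym1]; ring
    set Δ : ℝ := θ i i + 2 * ∑ a ∈ Cs, θ i a with hΔ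
    have hΔpos : 0 < Δ := by
      have h1 : 0 < θ i i := hθdiag i hiW
      have h2 : 0 ≤ ∑ a ∈ Cs, θ i a := Finset.sum_nonneg fun a _ => hθnn i a
      simp only [hΔ]; linarith
    have hE : r i * Δ ≤ r i * θ i i + 2 * ∑ a ∈ Cs, rhat i a * θ i a := by
      have hsumle : ∑ a ∈ Cs, r i * θ i a ≤ ∑ a ∈ Cs, rhat i a * θ i a := by
        refine Finset.sum_le_sum fun a ha => ?_
        have hia : i ≠ a := fun h => hiC (h ▸ ha)
        rw [hrhat, if_neg hia]
        have hra : 0 < r a := hr a (hCs ha)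
        nlinarith [hθnn i a]
      have : r i * Δ = r i * θ i i + 2 * ∑ a ∈ Cs, r i * θ i a := by
        rw [hΔ, ← Finset.mul_sum]; ring
      linarith
    have hgt : R Cs < R (insert i Cs) := by
      rw [hR (insert i Cs), hnum, hden, hRCs]
      rw [div_lt_div_iff₀ hD (by linarith)]
      nlinarith
    have := hmax (insert i Cs) (Finset.insert_subset hiW hCs)
    linarith
  refine ⟨key, fun i hiW hiC => ?_⟩
  by_contra h
  push_neg at h
  exact hiC (key i hiW h)
end

section
/- Let C* be a set maximizing the BundleMVL-2 expected revenue R over all subsets of W, and let i ∈ C* with C* \ {i} nonempty. Then there exists j ∈ C*, j ≠ i, such that r_i + r_j ≥ R(C*). -/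
open Finset

lemma double_sum_insert' {ι : Type*} [DecidableEq ι] (C : Finset ι) (i : ι)
    (hi : i ∉ C) (f : ι → ι → ℝ) (hf : ∀ a b, f a b = f b a) :
    ∑ a ∈ insert i C, ∑ b ∈ insert i C, f a b
      = f i i + 2 * ∑ j ∈ C, f i j + ∑ a ∈ C, ∑ b ∈ C, f a b := by
  rw [Finset.sum_insert hi]
  simp only [Finset.sum_insert hi]
  rw [show (∑ a ∈ C, (f a i + ∑ b ∈ C, f a b))
      = ∑ a ∈ C, f a i + ∑ a ∈ C, ∑ b ∈ C, f a b from Finset.sum_add_distrib]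
  rw [show ∑ a ∈ C, f a i = ∑ a ∈ C, f i a from
    Finset.sum_congr rfl (fun a _ => hf a i)]
  ring

/-- Every product in an optimal set has a distinct partner in the optimal set whose combined
revenue is at least the optimal expected revenue. -/
theorem optimal_set_partner_exists {ι : Type*} [DecidableEq ι]
    (W : Finset ι) (r : ι → ℝ) (θ : ι → ι → ℝ) (v0 : ℝ)
    (hv0 : 0 < v0)
    (hr : ∀ i ∈ W, 0 < r i)
    (hθsymm : ∀ i j, θ i j = θ j i)
    (hθnn : ∀ i j, 0 ≤ θ i j)
    (hθdiag : ∀ i ∈ W, 0 < θ i i)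
    (rhat : ι → ι → ℝ)
    (hrhat : ∀ i j, rhat i j = if i = j then r i else r i + r j)
    (R : Finset ι → ℝ)
    (hR : ∀ C, R C = (∑ i ∈ C, ∑ j ∈ C, rhat i j * θ i j) /
        (v0 + ∑ i ∈ C, ∑ j ∈ C, θ i j))
    (Cs : Finset ι) (hCs : Cs ⊆ W)
    (hmax : ∀ C ⊆ W, R C ≤ R Cs)
    (i : ι) (hi : i ∈ Cs) (hne : (Cs \ {i}).Nonempty) :
    ∃ j ∈ Cs, j ≠ i ∧ r i + r j ≥ R Cs := by
  by_contra h
  push_neg at h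
  set C' : Finset ι := Cs.erase i with hC'
  have hneC' : C'.Nonempty := by
    rwa [Finset.sdiff_singleton_eq_erase] at hne
  have hiC' : i ∉ C' := Finset.notMem_erase i Cs
  have hCsins : Cs = insert i C' := (Finset.insert_erase hi).symm
  have hsubW : C' ⊆ W := (Finset.erase_subset i Cs).trans hCs
  -- symmetry of rhat*θ and θ
  have hrhatsymm : ∀ a b, rhat a b = rhat b a := by
    intro a b
    rw [hrhat, hrhat]
    by_cases hab : a = b
    · subst hab; simp
    · rw [if_neg hab, if_neg (Ne.symm hab)]; ring
  have hfsym : ∀ a b, rhat a b * θ a b = rhat b a * θ b a := by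
    intro a b; rw [hrhatsymm a b, hθsymm a b]
  -- notation
  set S : ℝ := ∑ a ∈ C', ∑ b ∈ C', rhat a b * θ a b with hS
  set T : ℝ := ∑ a ∈ C', ∑ b ∈ C', θ a b with hT
  set ΔN : ℝ := rhat i i * θ i i + 2 * ∑ j ∈ C', rhat i j * θ i j with hDN
  set ΔD : ℝ := θ i i + 2 * ∑ j ∈ C', θ i j with hDD
  have hNs : ∑ a ∈ Cs, ∑ b ∈ Cs, rhat a b * θ a b = S + ΔN := by
    rw [hCsins, double_sum_insert' C' i hiC' _ hfsym]; ring
  have hDs : ∑ a ∈ Cs, ∑ b ∈ Cs, θ a b = v0 + T + ΔD - v0 := by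
    rw [hCsins, double_sum_insert' C' i hiC' _ hθsymm]; ring
  -- positivity of denominators
  have hTnn : 0 ≤ T := Finset.sum_nonneg fun a _ =>
    Finset.sum_nonneg fun b _ => hθnn a b
  have hΔDnn : 0 ≤ ΔD := by
    have h1 : 0 ≤ θ i i := hθnn i i
    have h2 : 0 ≤ ∑ j ∈ C', θ i j := Finset.sum_nonneg fun j _ => hθnn i j
    rw [hDD]; linarith
  have hD' : 0 < v0 + T := by linarith
  have hDspos : 0 < v0 + T + ΔD := by linarith
  set ρ : ℝ := R Cs with hρ
  have hρeq : ρ = (S + ΔN) / (v0 + T + ΔD) := by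
    rw [hρ, hR, hNs, hDs]; ring_nf
  -- from optimality of Cs over C'
  have hle : S / (v0 + T) ≤ ρ := by
    have := hmax C' hsubW
    rwa [hR, ← hS, ← hT] at this
  -- key inequality: ρ * ΔD ≤ ΔN
  have hkey : ρ * ΔD ≤ ΔN := by
    have h1 : S * (v0 + T + ΔD) ≤ (S + ΔN) * (v0 + T) := by
      rw [hρeq] at hle
      have := (div_le_div_iff₀ hD' hDspos).mp hle
      linarith
    have h2 : (S + ΔN) * ΔD ≤ ΔN * (v0 + T + ΔD) := by nlinarith
    rw [hρeq]
    rw [div_mul_eq_mul_div, div_le_iff₀ hDspos]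
    nlinarith
  -- but termwise ΔN < ρ * ΔD
  obtain ⟨j0, hj0⟩ := hneC'
  have hj0Cs : j0 ∈ Cs := Finset.mem_of_mem_erase hj0
  have hj0ne : j0 ≠ i := Finset.ne_of_mem_erase hj0
  have hri : r i < ρ := by
    have := h j0 hj0Cs hj0ne
    have := hr j0 (hCs hj0Cs)
    linarith
  have hθii : 0 < θ i i := hθdiag i (hCs hi)
  have hsumlt : ∑ j ∈ C', rhat i j * θ i j ≤ ∑ j ∈ C', ρ * θ i j := by
    apply Finset.sum_le_sum
    intro j hj
    have hjne : j ≠ i := Finset.ne_of_mem_erase hj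
    have hrle : r i + r j ≤ ρ := le_of_lt (h j (Finset.mem_of_mem_erase hj) hjne)
    rw [hrhat, if_neg (Ne.symm hjne)]
    exact mul_le_mul_of_nonneg_right hrle (hθnn i j)
  have hlt : ΔN < ρ * ΔD := by
    have hdiag : rhat i i * θ i i < ρ * θ i i := by
      rw [hrhat, if_pos rfl]
      exact mul_lt_mul_of_pos_right hri hθii
    have hsum : ∑ j ∈ C', ρ * θ i j = ρ * ∑ j ∈ C', θ i j := by
      rw [Finset.mul_sum]
    rw [hDN, hDD]
    nlinarith [hsumlt]
  linarith
end

section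
/- Let C* be a maximizer of the BundleMVL-2 expected revenue R over all subsets of W of minimum cardinality among maximizers, with |C*| ≥ 2. Then for every i ∈ C* there exists j ∈ C*, j ≠ i, with r_i + r_j > R(C*) (strict inequality). -/
open Finset

/-- For a minimum-cardinality optimal set of size ≥ 2, every product has a distinct partner in
the set with combined revenue strictly exceeding the optimal expected revenue. -/
theorem min_cardinality_optimal_set_strict_partner {ι : Type*} [DecidableEq ι]
    (W : Finset ι) (r : ι → ℝ) (θ : ι → ι → ℝ) (v0 : ℝ)
    (hv0 : 0 < v0)
    (hr : ∀ i ∈ W, 0 < r i)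
    (hθsymm : ∀ i j, θ i j = θ j i)
    (hθnn : ∀ i j, 0 ≤ θ i j)
    (hθdiag : ∀ i ∈ W, 0 < θ i i)
    (rhat : ι → ι → ℝ)
    (hrhat : ∀ i j, rhat i j = if i = j then r i else r i + r j)
    (R : Finset ι → ℝ)
    (hR : ∀ C, R C = (∑ i ∈ C, ∑ j ∈ C, rhat i j * θ i j) /
        (v0 + ∑ i ∈ C, ∑ j ∈ C, θ i j))
    (Cs : Finset ι) (hCs : Cs ⊆ W)
    (hmax : ∀ C ⊆ W, R C ≤ R Cs)
    (hmincard : ∀ C ⊆ W, (∀ D ⊆ W, R D ≤ R C) → Cs.card ≤ C.card)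
    (hcard : 2 ≤ Cs.card) :
    ∀ i ∈ Cs, ∃ j ∈ Cs, j ≠ i ∧ r i + r j > R Cs := by
  intro i hi
  by_contra hcon
  push_neg at hcon
  -- hcon : ∀ j ∈ Cs, j ≠ i → r i + r j ≤ R Cs
  set C' := Cs.erase i with hC'def
  have hiC' : i ∉ C' := Finset.notMem_erase i Cs
  have hCs_eq : Cs = insert i C' := (Finset.insert_erase hi).symm
  have hC'sub : C' ⊆ W := (Finset.erase_subset i Cs).trans hCs
  -- a partner j ∈ C'
  have hC'ne : C'.Nonempty := by
    rw [← Finset.card_pos, Finset.card_erase_of_mem hi]; omega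
  obtain ⟨j, hjC'⟩ := hC'ne
  have hji : j ≠ i := (Finset.mem_erase.mp hjC').1
  have hjCs : j ∈ Cs := Finset.mem_of_mem_erase hjC'
  -- r i < R Cs
  have hrj : 0 < r j := hr j (hCs hjCs)
  have hriR : r i < R Cs := lt_of_lt_of_le (by linarith) (hcon j hjCs hji)
  -- decomposition of double sums
  have hdec : ∀ f : ι → ι → ℝ, ∑ a ∈ Cs, ∑ b ∈ Cs, f a b
      = f i i + (∑ b ∈ C', f i b) + (∑ a ∈ C', f a i)
        + ∑ a ∈ C', ∑ b ∈ C', f a b := by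
    intro f
    rw [hCs_eq, Finset.sum_insert hiC', Finset.sum_insert hiC']
    have h1 : ∀ a ∈ C', ∑ b ∈ insert i C', f a b = f a i + ∑ b ∈ C', f a b := by
      intro a _; rw [Finset.sum_insert hiC']
    rw [Finset.sum_congr rfl h1, Finset.sum_add_distrib]
    ring
  -- symmetry of the cross sums
  have hsymθ : (∑ a ∈ C', θ a i) = ∑ b ∈ C', θ i b :=
    Finset.sum_congr rfl fun a _ => hθsymm a i
  have hsymr : (∑ a ∈ C', rhat a i * θ a i) = ∑ b ∈ C', rhat i b * θ i b := by
    refine Finset.sum_congr rfl fun a ha => ?_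
    have hai : a ≠ i := (Finset.mem_erase.mp ha).1
    rw [hrhat, hrhat, if_neg hai, if_neg (Ne.symm hai), hθsymm a i]
    ring
  set Sθ : ℝ := ∑ a ∈ C', ∑ b ∈ C', θ a b with hSθ
  set Sr : ℝ := ∑ a ∈ C', ∑ b ∈ C', rhat a b * θ a b with hSr
  set tθ : ℝ := ∑ b ∈ C', θ i b with htθ
  set tr : ℝ := ∑ b ∈ C', rhat i b * θ i b with htr
  have hDdec : (∑ a ∈ Cs, ∑ b ∈ Cs, θ a b) = θ i i + 2 * tθ + Sθ := by
    rw [hdec (fun a b => θ a b)]; rw [hsymθ]; ring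
  have hNdec : (∑ a ∈ Cs, ∑ b ∈ Cs, rhat a b * θ a b)
      = r i * θ i i + 2 * tr + Sr := by
    rw [hdec (fun a b => rhat a b * θ a b)]
    rw [hsymr, hrhat i i, if_pos rfl]; ring
  -- positivity
  have hSθnn : 0 ≤ Sθ :=
    Finset.sum_nonneg fun a _ => Finset.sum_nonneg fun b _ => hθnn a b
  have htθnn : 0 ≤ tθ := Finset.sum_nonneg fun b _ => hθnn i b
  have hθii : 0 < θ i i := hθdiag i (hCs hi)
  have hD'pos : 0 < v0 + Sθ := by linarith
  have hDpos : 0 < v0 + (θ i i + 2 * tθ + Sθ) := by linarith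
  -- N = R Cs * D
  have hNeq : r i * θ i i + 2 * tr + Sr = R Cs * (v0 + (θ i i + 2 * tθ + Sθ)) := by
    have := hR Cs
    rw [hDdec, hNdec] at this
    field_simp at this
    linarith [this]
  -- tr ≤ R Cs * tθ
  have htrle : tr ≤ R Cs * tθ := by
    rw [htr, htθ, Finset.mul_sum]
    refine Finset.sum_le_sum fun b hb => ?_
    have hbi : b ≠ i := (Finset.mem_erase.mp hb).1
    have hbCs : b ∈ Cs := Finset.mem_of_mem_erase hb
    rw [hrhat, if_neg (Ne.symm hbi)]
    exact mul_le_mul_of_nonneg_right (hcon b hbCs hbi) (hθnn i b)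
  have hdiag : r i * θ i i < R Cs * θ i i :=
    mul_lt_mul_of_pos_right hriR hθii
  -- conclude Sr > R Cs * (v0 + Sθ)
  have hkey : R Cs * (v0 + Sθ) < Sr := by nlinarith
  have hRC' : R Cs < R C' := by
    rw [hR C', ← hSθ, ← hSr, lt_div_iff₀ hD'pos]
    exact hkey
  exact absurd (hmax C' hC'sub) (not_le.mpr hRC')
end

section
/- Suppose products are ordered so that r_1 ≥ r_2 ≥ ⋯ ≥ r_n, and let A_m = {1,…,m} denote the m-th revenue-ordered set. Let C* maximize R over all subsets of W and let k satisfy r_k > R(C*) ≥ r_{k+1}. Then R(A_1) ≤ R(A_2) ≤ ⋯ ≤ R(A_k); i.e., the revenue of revenue-ordered sets increases monotonically as long as all included products have price exceeding R(C*). -/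
open Finset

lemma sum_insert_sym {A : Finset ℕ} {a : ℕ} (ha : a ∉ A) (f : ℕ → ℕ → ℝ)
    (hf : ∀ i j, f i j = f j i) :
    ∑ i ∈ insert a A, ∑ j ∈ insert a A, f i j
      = f a a + 2 * ∑ j ∈ A, f a j + ∑ i ∈ A, ∑ j ∈ A, f i j := by
  rw [Finset.sum_insert ha, Finset.sum_insert ha]
  simp only [Finset.sum_insert ha]
  rw [Finset.sum_add_distrib]
  have h : ∑ i ∈ A, f i a = ∑ j ∈ A, f a j :=
    Finset.sum_congr rfl (fun i _ => hf i a)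
  rw [h]; ring

/-- Monotonicity of revenue-ordered sets: with products sorted in decreasing revenue, the
revenue of revenue-ordered sets A_m increases as long as all included products have price
exceeding the optimal revenue R(C*). -/
theorem revenue_ordered_monotone (n : ℕ) (r : ℕ → ℝ) (θ : ℕ → ℕ → ℝ) (v0 : ℝ)
    (hv0 : 0 < v0)
    (hr : ∀ i ∈ Finset.Icc 1 n, 0 < r i)
    (hsort : ∀ i j, 1 ≤ i → i ≤ j → j ≤ n → r j ≤ r i)
    (hθsymm : ∀ i j, θ i j = θ j i)
    (hθnn : ∀ i j, 0 ≤ θ i j)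
    (hθdiag : ∀ i ∈ Finset.Icc 1 n, 0 < θ i i)
    (rhat : ℕ → ℕ → ℝ)
    (hrhat : ∀ i j, rhat i j = if i = j then r i else r i + r j)
    (R : Finset ℕ → ℝ)
    (hR : ∀ C, R C = (∑ i ∈ C, ∑ j ∈ C, rhat i j * θ i j) /
        (v0 + ∑ i ∈ C, ∑ j ∈ C, θ i j))
    (Cs : Finset ℕ) (hCs : Cs ⊆ Finset.Icc 1 n)
    (hmax : ∀ C ⊆ Finset.Icc 1 n, R C ≤ R Cs)
    (k : ℕ) (hk1 : 1 ≤ k) (hkn : k < n)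
    (hklo : r k > R Cs) (hkhi : R Cs ≥ r (k + 1)) :
    ∀ m, 1 ≤ m → m < k → R (Finset.Icc 1 m) ≤ R (Finset.Icc 1 (m + 1)) := by
  intro m hm1 hmk
  set a := m + 1 with ha_def
  have hak : a ≤ k := hmk
  have han : a ≤ n := le_of_lt (lt_of_le_of_lt hak hkn)
  set A := Finset.Icc 1 m with hA_def
  have hnot : a ∉ A := by simp [hA_def, ha_def]
  have hins : Finset.Icc 1 a = insert a A := by
    ext x; simp [hA_def, ha_def]; omega
  have hAsub : A ⊆ Finset.Icc 1 n := Finset.Icc_subset_Icc_right (by omega)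
  have haIcc : a ∈ Finset.Icc 1 n := by simp [ha_def]; omega
  -- symmetry of rhat*θ
  have hgsymm : ∀ i j, rhat i j * θ i j = rhat j i * θ j i := by
    intro i j
    rw [hrhat, hrhat, hθsymm]
    rcases eq_or_ne i j with h | h
    · simp [h]
    · rw [if_neg h, if_neg h.symm]; ring
  -- abbreviations
  set N := ∑ i ∈ A, ∑ j ∈ A, rhat i j * θ i j with hN
  set D := ∑ i ∈ A, ∑ j ∈ A, θ i j with hD
  set δN := rhat a a * θ a a + 2 * ∑ j ∈ A, rhat a j * θ a j with hδN
  set δD := θ a a + 2 * ∑ j ∈ A, θ a j with hδD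
  have hsplitN : ∑ i ∈ Finset.Icc 1 a, ∑ j ∈ Finset.Icc 1 a, rhat i j * θ i j
      = δN + N := by
    rw [hins, sum_insert_sym hnot _ hgsymm]
  have hsplitD : ∑ i ∈ Finset.Icc 1 a, ∑ j ∈ Finset.Icc 1 a, θ i j = δD + D := by
    rw [hins, sum_insert_sym hnot _ hθsymm]
  have hDnn : 0 ≤ D := Finset.sum_nonneg fun i _ =>
    Finset.sum_nonneg fun j _ => hθnn i j
  have hδDpos : 0 < δD := by
    have h1 : 0 < θ a a := hθdiag a haIcc
    have h2 : 0 ≤ ∑ j ∈ A, θ a j := Finset.sum_nonneg fun j _ => hθnn a j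
    rw [hδD]; linarith
  have hra : 0 < r a := hr a haIcc
  -- δN ≥ r a * δD
  have hδNge : r a * δD ≤ δN := by
    have hdiag : rhat a a = r a := by rw [hrhat]; simp
    have hterm : ∀ j ∈ A, r a * θ a j ≤ rhat a j * θ a j := by
      intro j hj
      have hjA : j ∈ Finset.Icc 1 n := hAsub hj
      have hjne : a ≠ j := by
        simp [hA_def] at hj; omega
      rw [hrhat, if_neg hjne]
      nlinarith [hθnn a j, hr j hjA]
    have hsum : ∑ j ∈ A, r a * θ a j ≤ ∑ j ∈ A, rhat a j * θ a j :=
      Finset.sum_le_sum hterm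
    have hsum' : r a * ∑ j ∈ A, θ a j ≤ ∑ j ∈ A, rhat a j * θ a j := by
      rw [Finset.mul_sum]; exact hsum
    rw [hδN, hδD, hdiag]
    nlinarith [hsum']
  -- R A < r a
  have hRA : R A ≤ R Cs := hmax A hAsub
  have hrk : r k ≤ r a := hsort a k (by omega) hak (le_of_lt hkn)
  have hRAlt : R A < r a := lt_of_le_of_lt hRA (lt_of_lt_of_le hklo hrk)
  have hden : 0 < v0 + D := by linarith
  have hden2 : 0 < v0 + (δD + D) := by linarith
  have hN_lt : N < r a * (v0 + D) := by
    have := hRAlt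
    rw [hR A, ← hN, ← hD] at this
    calc N = N / (v0 + D) * (v0 + D) := by field_simp
    _ < r a * (v0 + D) := by exact mul_lt_mul_of_pos_right this hden
  rw [hR A, hR (Finset.Icc 1 (m+1)), ← hN, ← hD]
  show N / (v0 + D) ≤ _
  rw [show Finset.Icc 1 (m+1) = Finset.Icc 1 a from rfl, hsplitN, hsplitD]
  rw [div_le_div_iff₀ hden hden2]
  nlinarith [mul_pos hden hδDpos]
end

section
/- Under Assumption ε-small (every pair weight V_{{i,j}} is at most ε times the minimum of v₀ and all singleton weights V_{{k}}), for every set C ⊆ W: R_MNL(C) − R₂(C) ≤ (ε·|C|/2)·R_MNL(C), i.e., R_MNL(C) ≤ (2/(2 − ε|C|))·R₂(C) whenever ε|C| < 2. -/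
open Finset

/-!
Adding the pairs to the assortment adds pair weight `P` to the denominator and nonnegative pair
revenue to the numerator, so `R_MNL(C) - R₂(C) ≤ R_MNL(C) · P / (D + P)` with `D` the MNL
denominator. Bounding each `V_{i,j}` by `ε (V_i + V_j) / 2` and counting how often each singleton
weight appears among the pairs gives `P ≤ ε (|C| - 1) / 2 · Σ V_i ≤ (ε |C| / 2) · D`.
-/

namespace Finset

variable {ι : Type*} [LinearOrder ι]

def pairSum {M : Type*} [AddCommMonoid M] (s : Finset ι) (g : ι → ι → M) : M :=
  ∑ i ∈ s, ∑ j ∈ s.filter (fun j => i < j), g i j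

theorem pairSum_eq_sum_sum_filter_lt {M : Type*} [AddCommMonoid M] (s : Finset ι)
    (g : ι → ι → M) : pairSum s g = ∑ j ∈ s, ∑ i ∈ s.filter (fun i => i < j), g i j :=
  sum_comm' fun i j => by simp only [mem_filter]; tauto

theorem card_filter_gt_add_card_filter_lt {s : Finset ι} {i : ι} (hi : i ∈ s) :
    #(s.filter (fun j => i < j)) + #(s.filter (fun j => j < i)) + 1 = #s := by
  have hdisj : Disjoint (s.filter (fun j => i < j)) (s.filter (fun j => j < i)) :=
    disjoint_filter.mpr fun _ _ h h' => lt_asymm h h'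
  have hunion : s.filter (fun j => i < j) ∪ s.filter (fun j => j < i) = s.erase i := by
    ext j
    simp only [mem_union, mem_filter, mem_erase, ne_eq]
    constructor
    · rintro (⟨hj, h⟩ | ⟨hj, h⟩) <;> exact ⟨by rintro rfl; exact lt_irrefl _ h, hj⟩
    · rintro ⟨hne, hj⟩
      rcases lt_or_gt_of_ne hne with h | h
      exacts [Or.inr ⟨hj, h⟩, Or.inl ⟨hj, h⟩]
  rw [← card_union_of_disjoint hdisj, hunion, card_erase_add_one hi]

theorem pairSum_add_eq_card_sub_one_mul_sum (s : Finset ι) (f : ι → ℝ) :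
    pairSum s (fun i j => f i + f j) = ((#s : ℝ) - 1) * ∑ i ∈ s, f i := by
  have hsplit : pairSum s (fun i j => f i + f j)
      = ∑ i ∈ s, (#(s.filter (fun j => i < j)) + #(s.filter (fun j => j < i)) : ℝ) * f i := by
    have hswap : ∑ i ∈ s, ∑ j ∈ s.filter (fun j => i < j), f j
        = ∑ j ∈ s, ∑ i ∈ s.filter (fun i => i < j), f j :=
      pairSum_eq_sum_sum_filter_lt s fun _ j => f j
    simp only [pairSum, sum_add_distrib]
    rw [hswap, ← sum_add_distrib]
    simp only [sum_const, nsmul_eq_mul, add_mul]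
  rw [hsplit, mul_sum]
  refine sum_congr rfl fun i hi => ?_
  have hcard := card_filter_gt_add_card_filter_lt hi
  rw [← hcard]
  push_cast
  ring

theorem pairSum_le_of_le_mul_min {s : Finset ι} {g : ι → ι → ℝ} {f : ι → ℝ} {ε : ℝ}
    (hg : ∀ i ∈ s, ∀ j ∈ s, i < j → g i j ≤ ε * f i ∧ g i j ≤ ε * f j) :
    pairSum s g ≤ ε / 2 * (((#s : ℝ) - 1) * ∑ i ∈ s, f i) := by
  rw [← pairSum_add_eq_card_sub_one_mul_sum, pairSum, pairSum, mul_sum]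
  refine sum_le_sum fun i hi => ?_
  rw [mul_sum]
  refine sum_le_sum fun j hj => ?_
  obtain ⟨hj, hij⟩ := mem_filter.mp hj
  obtain ⟨hi', hj'⟩ := hg i hi j hj hij
  linarith

end Finset

theorem div_sub_add_div_add_le {N Q D P δ : ℝ} (hN : 0 ≤ N) (hQ : 0 ≤ Q) (hD : 0 < D)
    (hP : 0 ≤ P) (hPD : P ≤ δ * D) : N / D - (N + Q) / (D + P) ≤ δ * (N / D) := by
  have hδ : 0 ≤ δ := nonneg_of_mul_nonneg_left (hP.trans hPD) hD
  calc N / D - (N + Q) / (D + P)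
      ≤ N / D - N / (D + P) := by gcongr; linarith
    _ = P / (D + P) * (N / D) := by field_simp; ring
    _ ≤ δ * (N / D) := by
        gcongr
        rw [div_le_iff₀ (by linarith)]
        nlinarith

theorem le_div_sub_mul_of_sub_le {x y a : ℝ} (h : x - y ≤ a / 2 * x) (ha : a < 2) :
    x ≤ 2 / (2 - a) * y := by
  rw [div_mul_eq_mul_div, le_div_iff₀ (by linarith)]
  linarith

theorem mnl_upper_bound_by_bundle_general {ι : Type*} [LinearOrder ι]
    (W : Finset ι) (r V1 : ι → ℝ) (V2 : ι → ι → ℝ) (v0 ε : ℝ)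
    (hv0 : 0 < v0) (hε : 0 < ε)
    (hr : ∀ i ∈ W, 0 < r i)
    (hV1 : ∀ i ∈ W, 0 < V1 i)
    (hV2nn : ∀ i j, 0 ≤ V2 i j)
    (hsmall : ∀ i ∈ W, ∀ j ∈ W, i ≠ j → V2 i j ≤ ε * v0 ∧ ∀ k ∈ W, V2 i j ≤ ε * V1 k)
    (RMNL R2 : Finset ι → ℝ)
    (hRMNL : ∀ C, RMNL C = (∑ i ∈ C, V1 i * r i) / (v0 + ∑ i ∈ C, V1 i))
    (hR2 : ∀ C, R2 C =
      ((∑ i ∈ C, V1 i * r i) + ∑ i ∈ C, ∑ j ∈ C.filter (fun j => i < j), V2 i j * (r i + r j)) /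
      (v0 + (∑ i ∈ C, V1 i) + ∑ i ∈ C, ∑ j ∈ C.filter (fun j => i < j), V2 i j))
    (C : Finset ι) (hC : C ⊆ W) :
    RMNL C - R2 C ≤ (ε * C.card / 2) * RMNL C ∧
    (ε * C.card < 2 → RMNL C ≤ (2 / (2 - ε * C.card)) * R2 C) := by
  have hV1C : 0 ≤ ∑ i ∈ C, V1 i := sum_nonneg fun i hi => (hV1 i (hC hi)).le
  have hpair : pairSum C V2 ≤ ε / 2 * (((#C : ℝ) - 1) * ∑ i ∈ C, V1 i) :=
    pairSum_le_of_le_mul_min fun i hi j hj hij =>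
      have h := (hsmall i (hC hi) j (hC hj) hij.ne).2
      ⟨h i (hC hi), h j (hC hj)⟩
  have hPD : pairSum C V2 ≤ ε * #C / 2 * (v0 + ∑ i ∈ C, V1 i) := by
    have hslack : 0 ≤ ε / 2 * (∑ i ∈ C, V1 i + #C * v0) := by positivity
    linarith
  have hmain : RMNL C - R2 C ≤ (ε * C.card / 2) * RMNL C := by
    rw [hRMNL, hR2]
    refine div_sub_add_div_add_le
      (sum_nonneg fun i hi => mul_nonneg (hV1 i (hC hi)).le (hr i (hC hi)).le)
      (sum_nonneg fun i hi => sum_nonneg fun j hj => mul_nonneg (hV2nn i j) ?_)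
      (by positivity) (sum_nonneg fun i _ => sum_nonneg fun j _ => hV2nn i j) hPD
    have := hr i (hC hi)
    have := hr j (hC (mem_filter.mp hj).1)
    positivity
  exact ⟨hmain, le_div_sub_mul_of_sub_le hmain⟩

/-- Under the ε-small pair weight assumption, the MNL revenue is not much larger than the
BundleMVL-2 revenue: R_MNL(C) − R₂(C) ≤ (ε|C|/2)·R_MNL(C), hence
R_MNL(C) ≤ (2/(2−ε|C|))·R₂(C) whenever ε|C| < 2. -/
theorem mnl_upper_bound_by_bundle {ι : Type*} [LinearOrder ι]
    (W : Finset ι) (r V1 : ι → ℝ) (V2 : ι → ι → ℝ) (v0 ε : ℝ)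
    (hv0 : 0 < v0) (hε : 0 < ε)
    (hr : ∀ i ∈ W, 0 < r i)
    (hV1 : ∀ i ∈ W, 0 < V1 i)
    (hV2nn : ∀ i j, 0 ≤ V2 i j)
    (hV2symm : ∀ i j, V2 i j = V2 j i)
    (hsmall : ∀ i ∈ W, ∀ j ∈ W, i ≠ j → V2 i j ≤ ε * v0 ∧ ∀ k ∈ W, V2 i j ≤ ε * V1 k)
    (RMNL R2 : Finset ι → ℝ)
    (hRMNL : ∀ C, RMNL C = (∑ i ∈ C, V1 i * r i) / (v0 + ∑ i ∈ C, V1 i))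
    (hR2 : ∀ C, R2 C =
      ((∑ i ∈ C, V1 i * r i) + ∑ i ∈ C, ∑ j ∈ C.filter (fun j => i < j), V2 i j * (r i + r j)) /
      (v0 + (∑ i ∈ C, V1 i) + ∑ i ∈ C, ∑ j ∈ C.filter (fun j => i < j), V2 i j))
    (C : Finset ι) (hC : C ⊆ W) :
    RMNL C - R2 C ≤ (ε * C.card / 2) * RMNL C ∧
    (ε * C.card < 2 → RMNL C ≤ (2 / (2 - ε * C.card)) * R2 C) :=
  mnl_upper_bound_by_bundle_general W r V1 V2 v0 ε hv0 hε hr hV1 hV2nn hsmall RMNL R2 hRMNL hR2 C hC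
end

section
/- Under Assumption ε-small (every pair weight V_{{i,j}} is at most ε times the minimum of v₀ and all singleton weights V_{{k}}), for every set C ⊆ W: R₂(C) − R_MNL(C) ≤ 2ε|C|·R_MNL(C), i.e., R₂(C) ≤ (1 + 2ε|C|)·R_MNL(C). -/
open Finset

/-! Each pair term is dominated by its singleton terms: `V₂ᵢⱼ (rᵢ + rⱼ) ≤ ε (V₁ᵢ rᵢ + V₁ⱼ rⱼ)`.
Summing over the pairs of `C`, every singleton term is counted fewer than `|C|` times, so the
extra numerator of `R₂(C)` is at most `2ε|C|` times the MNL numerator, while the extra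
denominator is nonnegative. -/

theorem add_div_add_le_one_add_mul_div {K : Type*} [Field K] [LinearOrder K]
    [IsStrictOrderedRing K] {N D P Q c : K} (hN : 0 ≤ N) (hc : 0 ≤ c) (hD : 0 < D) (hQ : 0 ≤ Q)
    (hP : P ≤ c * N) :
    (N + P) / (D + Q) ≤ (1 + c) * (N / D) := by
  calc (N + P) / (D + Q) ≤ (N + c * N) / D :=
        div_le_div₀ (by positivity) (by linarith) hD (by linarith)
    _ = (1 + c) * (N / D) := by ring

theorem mul_add_le_of_le_mul_of_le_mul {K : Type*} [Field K] [LinearOrder K]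
    [IsStrictOrderedRing K] {a b c x y ε : K} (hx : 0 ≤ x) (hy : 0 ≤ y)
    (hb : a ≤ ε * b) (hc : a ≤ ε * c) :
    a * (x + y) ≤ ε * (b * x + c * y) := by
  nlinarith [mul_le_mul_of_nonneg_right hb hx, mul_le_mul_of_nonneg_right hc hy]

theorem sum_sum_lt_le_two_mul_card_mul_sum {ι K : Type*} [LinearOrder ι] [Field K]
    [LinearOrder K] [IsStrictOrderedRing K] (C : Finset ι) (f : ι → ι → K) (g : ι → K) {ε : K}
    (hε : 0 ≤ ε) (hg : ∀ i ∈ C, 0 ≤ g i)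
    (hf : ∀ i ∈ C, ∀ j ∈ C, i < j → f i j ≤ ε * (g i + g j)) :
    ∑ i ∈ C, ∑ j ∈ C.filter (fun j => i < j), f i j ≤ 2 * ε * C.card * ∑ i ∈ C, g i := by
  calc ∑ i ∈ C, ∑ j ∈ C.filter (fun j => i < j), f i j
      ≤ ∑ i ∈ C, ∑ j ∈ C.filter (fun j => i < j), ε * (g i + g j) := by
        gcongr with i hi j hj
        exact hf i hi j (mem_filter.mp hj).1 (mem_filter.mp hj).2
    _ ≤ ∑ i ∈ C, ∑ j ∈ C, ε * (g i + g j) := by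
        refine sum_le_sum fun i hi =>
          sum_le_sum_of_subset_of_nonneg (filter_subset _ _) fun j hj _ => ?_
        have := add_nonneg (hg i hi) (hg j hj)
        positivity
    _ = 2 * ε * C.card * ∑ i ∈ C, g i := by
        simp only [← mul_sum, sum_add_distrib, sum_const, nsmul_eq_mul]
        ring

theorem bundle_upper_bound_by_mnl_general {ι : Type*} [LinearOrder ι]
    (W : Finset ι) (r V1 : ι → ℝ) (V2 : ι → ι → ℝ) (v0 ε : ℝ)
    (hv0 : 0 < v0) (hε : 0 < ε)
    (hr : ∀ i ∈ W, 0 < r i)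
    (hV1 : ∀ i ∈ W, 0 < V1 i)
    (hV2nn : ∀ i j, 0 ≤ V2 i j)
    (hsmall : ∀ i ∈ W, ∀ j ∈ W, i ≠ j → V2 i j ≤ ε * v0 ∧ ∀ k ∈ W, V2 i j ≤ ε * V1 k)
    (RMNL R2 : Finset ι → ℝ)
    (hRMNL : ∀ C, RMNL C = (∑ i ∈ C, V1 i * r i) / (v0 + ∑ i ∈ C, V1 i))
    (hR2 : ∀ C, R2 C =
      ((∑ i ∈ C, V1 i * r i) + ∑ i ∈ C, ∑ j ∈ C.filter (fun j => i < j), V2 i j * (r i + r j)) /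
      (v0 + (∑ i ∈ C, V1 i) + ∑ i ∈ C, ∑ j ∈ C.filter (fun j => i < j), V2 i j))
    (C : Finset ι) (hC : C ⊆ W) :
    R2 C - RMNL C ≤ (2 * ε * C.card) * RMNL C ∧
    R2 C ≤ (1 + 2 * ε * C.card) * RMNL C := by
  have hsingle : ∀ i ∈ C, 0 ≤ V1 i * r i := fun i hi =>
    (mul_pos (hV1 i (hC hi)) (hr i (hC hi))).le
  have hpairs := sum_sum_lt_le_two_mul_card_mul_sum C (fun i j => V2 i j * (r i + r j))
    (fun i => V1 i * r i) hε.le hsingle fun i hi j hj hij =>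
      have hk := (hsmall i (hC hi) j (hC hj) hij.ne).2
      mul_add_le_of_le_mul_of_le_mul (hr i (hC hi)).le (hr j (hC hj)).le
        (hk i (hC hi)) (hk j (hC hj))
  have hupper : R2 C ≤ (1 + 2 * ε * C.card) * RMNL C := by
    rw [hR2, hRMNL]
    exact add_div_add_le_one_add_mul_div (sum_nonneg hsingle) (by positivity)
      (add_pos_of_pos_of_nonneg hv0 (sum_nonneg fun i hi => (hV1 i (hC hi)).le))
      (sum_nonneg fun i _ => sum_nonneg fun j _ => hV2nn i j) hpairs
  exact ⟨by linarith, hupper⟩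

/-- Under the ε-small pair weight assumption, the BundleMVL-2 revenue is not much larger than
the MNL revenue: R₂(C) − R_MNL(C) ≤ 2ε|C|·R_MNL(C), i.e. R₂(C) ≤ (1+2ε|C|)·R_MNL(C). -/
theorem bundle_upper_bound_by_mnl {ι : Type*} [LinearOrder ι]
    (W : Finset ι) (r V1 : ι → ℝ) (V2 : ι → ι → ℝ) (v0 ε : ℝ)
    (hv0 : 0 < v0) (hε : 0 < ε)
    (hr : ∀ i ∈ W, 0 < r i)
    (hV1 : ∀ i ∈ W, 0 < V1 i)
    (hV2nn : ∀ i j, 0 ≤ V2 i j)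
    (hV2symm : ∀ i j, V2 i j = V2 j i)
    (hsmall : ∀ i ∈ W, ∀ j ∈ W, i ≠ j → V2 i j ≤ ε * v0 ∧ ∀ k ∈ W, V2 i j ≤ ε * V1 k)
    (RMNL R2 : Finset ι → ℝ)
    (hRMNL : ∀ C, RMNL C = (∑ i ∈ C, V1 i * r i) / (v0 + ∑ i ∈ C, V1 i))
    (hR2 : ∀ C, R2 C =
      ((∑ i ∈ C, V1 i * r i) + ∑ i ∈ C, ∑ j ∈ C.filter (fun j => i < j), V2 i j * (r i + r j)) /
      (v0 + (∑ i ∈ C, V1 i) + ∑ i ∈ C, ∑ j ∈ C.filter (fun j => i < j), V2 i j))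
    (C : Finset ι) (hC : C ⊆ W) :
    R2 C - RMNL C ≤ (2 * ε * C.card) * RMNL C ∧
    R2 C ≤ (1 + 2 * ε * C.card) * RMNL C :=
  bundle_upper_bound_by_mnl_general W r V1 V2 v0 ε hv0 hε hr hV1 hV2nn hsmall RMNL R2 hRMNL hR2 C hC
end

section
/- Under Assumption ε-small, if C*_MNL maximizes the MNL revenue R_MNL over all subsets of W and C* maximizes the BundleMVL-2 revenue R₂ over all subsets of W, and ε|C*_MNL| < 2, then R₂(C*_MNL) ≥ ((2 − ε|C*_MNL|)/(2 + 4ε|C*|))·R₂(C*). -/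
open Finset

lemma pair_sum_bound {ι : Type*} [LinearOrder ι] (C : Finset ι) (g : ι → ι → ℝ) (f : ι → ℝ)
    (hf : ∀ i ∈ C, 0 ≤ f i)
    (hg : ∀ i ∈ C, ∀ j ∈ C, i < j → g i j ≤ f i + f j) :
    ∑ i ∈ C, ∑ j ∈ C.filter (fun j => i < j), g i j ≤ (C.card : ℝ) * ∑ i ∈ C, f i := by
  have step1 : ∑ i ∈ C, ∑ j ∈ C.filter (fun j => i < j), g i j
      ≤ ∑ i ∈ C, ∑ j ∈ C.filter (fun j => i < j), (f i + f j) := by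
    refine sum_le_sum fun i hi => sum_le_sum fun j hj => ?_
    rw [mem_filter] at hj
    exact hg i hi j hj.1 hj.2
  have swap : ∑ i ∈ C, ∑ j ∈ C.filter (fun j => i < j), f j
      = ∑ j ∈ C, ((C.filter (fun i => i < j)).card : ℝ) * f j := by
    have h1 : ∀ i ∈ C, ∑ j ∈ C.filter (fun j => i < j), f j
        = ∑ j ∈ C, if i < j then f j else 0 := fun i _ => sum_filter _ _
    rw [sum_congr rfl h1, sum_comm]
    refine sum_congr rfl fun j hj => ?_
    rw [← sum_filter, sum_const, nsmul_eq_mul]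
  have step2 : ∑ i ∈ C, ∑ j ∈ C.filter (fun j => i < j), (f i + f j)
      = ∑ i ∈ C, (((C.filter (fun j => i < j)).card : ℝ)
          + ((C.filter (fun j => j < i)).card : ℝ)) * f i := by
    have : ∀ i ∈ C, ∑ j ∈ C.filter (fun j => i < j), (f i + f j)
        = ((C.filter (fun j => i < j)).card : ℝ) * f i + ∑ j ∈ C.filter (fun j => i < j), f j := by
      intro i _
      rw [sum_add_distrib, sum_const, nsmul_eq_mul]
    rw [sum_congr rfl this, sum_add_distrib, swap]
    rw [← sum_add_distrib]
    exact sum_congr rfl fun i _ => by ring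
  have cardb : ∀ i ∈ C, ((C.filter (fun j => i < j)).card : ℝ)
      + ((C.filter (fun j => j < i)).card : ℝ) ≤ (C.card : ℝ) := by
    intro i _
    have hdisj : Disjoint (C.filter (fun j => i < j)) (C.filter (fun j => j < i)) := by
      rw [disjoint_filter]
      intro j _ h1 h2
      exact absurd (h1.trans h2) (lt_irrefl i)
    have hsub : C.filter (fun j => i < j) ∪ C.filter (fun j => j < i) ⊆ C :=
      union_subset (filter_subset _ _) (filter_subset _ _)
    have := card_le_card hsub
    rw [card_union_of_disjoint hdisj] at this
    exact_mod_cast this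
  calc ∑ i ∈ C, ∑ j ∈ C.filter (fun j => i < j), g i j
      ≤ ∑ i ∈ C, ∑ j ∈ C.filter (fun j => i < j), (f i + f j) := step1
    _ = ∑ i ∈ C, (((C.filter (fun j => i < j)).card : ℝ)
          + ((C.filter (fun j => j < i)).card : ℝ)) * f i := step2
    _ ≤ ∑ i ∈ C, (C.card : ℝ) * f i := by
        refine sum_le_sum fun i hi => mul_le_mul_of_nonneg_right (cardb i hi) (hf i hi)
    _ = (C.card : ℝ) * ∑ i ∈ C, f i := by rw [mul_sum]


/-- Under the ε-small assumption, the MNL-optimal set is nearly optimal for BundleMVL-2: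
R₂(C*_MNL) ≥ ((2 − ε|C*_MNL|)/(2 + 4ε|C*|))·R₂(C*). -/
theorem mnl_optimal_near_optimal_for_bundle {ι : Type*} [LinearOrder ι]
    (W : Finset ι) (r V1 : ι → ℝ) (V2 : ι → ι → ℝ) (v0 ε : ℝ)
    (hv0 : 0 < v0) (hε : 0 < ε)
    (hr : ∀ i ∈ W, 0 < r i)
    (hV1 : ∀ i ∈ W, 0 < V1 i)
    (hV2nn : ∀ i j, 0 ≤ V2 i j)
    (hV2symm : ∀ i j, V2 i j = V2 j i)
    (hsmall : ∀ i ∈ W, ∀ j ∈ W, i ≠ j → V2 i j ≤ ε * v0 ∧ ∀ k ∈ W, V2 i j ≤ ε * V1 k)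
    (RMNL R2 : Finset ι → ℝ)
    (hRMNL : ∀ C, RMNL C = (∑ i ∈ C, V1 i * r i) / (v0 + ∑ i ∈ C, V1 i))
    (hR2 : ∀ C, R2 C =
      ((∑ i ∈ C, V1 i * r i) + ∑ i ∈ C, ∑ j ∈ C.filter (fun j => i < j), V2 i j * (r i + r j)) /
      (v0 + (∑ i ∈ C, V1 i) + ∑ i ∈ C, ∑ j ∈ C.filter (fun j => i < j), V2 i j))
    (CM : Finset ι) (hCM : CM ⊆ W) (hCMmax : ∀ C ⊆ W, RMNL C ≤ RMNL CM)
    (Cs : Finset ι) (hCs : Cs ⊆ W) (hCsmax : ∀ C ⊆ W, R2 C ≤ R2 Cs)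
    (hεCM : ε * CM.card < 2) :
    R2 CM ≥ ((2 - ε * CM.card) / (2 + 4 * ε * Cs.card)) * R2 Cs := by
  -- generic facts for any C ⊆ W
  have key : ∀ C : Finset ι, C ⊆ W →
      (0 ≤ ∑ i ∈ C, V1 i * r i) ∧ (0 ≤ ∑ i ∈ C, V1 i) ∧
      (0 ≤ ∑ i ∈ C, ∑ j ∈ C.filter (fun j => i < j), V2 i j * (r i + r j)) ∧
      (0 ≤ ∑ i ∈ C, ∑ j ∈ C.filter (fun j => i < j), V2 i j) ∧
      (∑ i ∈ C, ∑ j ∈ C.filter (fun j => i < j), V2 i j * (r i + r j)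
        ≤ ε * C.card * ∑ i ∈ C, V1 i * r i) ∧
      (2 * ∑ i ∈ C, ∑ j ∈ C.filter (fun j => i < j), V2 i j
        ≤ ε * C.card * (v0 + ∑ i ∈ C, V1 i)) := by
    intro C hCW
    have hA : 0 ≤ ∑ i ∈ C, V1 i * r i :=
      sum_nonneg fun i hi => le_of_lt (mul_pos (hV1 i (hCW hi)) (hr i (hCW hi)))
    have hS : 0 ≤ ∑ i ∈ C, V1 i :=
      sum_nonneg fun i hi => le_of_lt (hV1 i (hCW hi))
    have hB : 0 ≤ ∑ i ∈ C, ∑ j ∈ C.filter (fun j => i < j), V2 i j * (r i + r j) := by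
      refine sum_nonneg fun i hi => sum_nonneg fun j hj => ?_
      rw [mem_filter] at hj
      exact mul_nonneg (hV2nn i j)
        (by linarith [hr i (hCW hi), hr j (hCW hj.1)])
    have hP : 0 ≤ ∑ i ∈ C, ∑ j ∈ C.filter (fun j => i < j), V2 i j :=
      sum_nonneg fun i _ => sum_nonneg fun j _ => hV2nn i j
    have hBbd : ∑ i ∈ C, ∑ j ∈ C.filter (fun j => i < j), V2 i j * (r i + r j)
        ≤ ε * C.card * ∑ i ∈ C, V1 i * r i := by
      have hg : ∀ i ∈ C, ∀ j ∈ C, i < j →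
          V2 i j * (r i + r j) ≤ ε * (V1 i * r i) + ε * (V1 j * r j) := by
        intro i hi j hj hij
        have hne : i ≠ j := ne_of_lt hij
        have h1 := ((hsmall i (hCW hi) j (hCW hj) hne).2 i (hCW hi))
        have h2 := ((hsmall i (hCW hi) j (hCW hj) hne).2 j (hCW hj))
        have hri := (hr i (hCW hi)).le
        have hrj := (hr j (hCW hj)).le
        nlinarith [mul_le_mul_of_nonneg_right h1 hri, mul_le_mul_of_nonneg_right h2 hrj]
      have := pair_sum_bound C (fun i j => V2 i j * (r i + r j)) (fun i => ε * (V1 i * r i))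
        (fun i hi => mul_nonneg hε.le (mul_nonneg (hV1 i (hCW hi)).le (hr i (hCW hi)).le)) hg
      calc ∑ i ∈ C, ∑ j ∈ C.filter (fun j => i < j), V2 i j * (r i + r j)
          ≤ (C.card : ℝ) * ∑ i ∈ C, ε * (V1 i * r i) := this
        _ = ε * C.card * ∑ i ∈ C, V1 i * r i := by rw [← mul_sum]; ring
    have hPbd : 2 * ∑ i ∈ C, ∑ j ∈ C.filter (fun j => i < j), V2 i j
        ≤ ε * C.card * (v0 + ∑ i ∈ C, V1 i) := by
      have hg : ∀ i ∈ C, ∀ j ∈ C, i < j → V2 i j ≤ ε / 2 * V1 i + ε / 2 * V1 j := by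
        intro i hi j hj hij
        have hne : i ≠ j := ne_of_lt hij
        have h1 := ((hsmall i (hCW hi) j (hCW hj) hne).2 i (hCW hi))
        have h2 := ((hsmall i (hCW hi) j (hCW hj) hne).2 j (hCW hj))
        linarith
      have hb := pair_sum_bound C (fun i j => V2 i j) (fun i => ε / 2 * V1 i)
        (fun i hi => mul_nonneg (by linarith) (hV1 i (hCW hi)).le) hg
      have hc : (0:ℝ) ≤ (C.card : ℝ) := Nat.cast_nonneg _
      have h2 : (C.card : ℝ) * ∑ i ∈ C, ε / 2 * V1 i = ε / 2 * C.card * ∑ i ∈ C, V1 i := by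
        rw [← mul_sum]; ring
      rw [h2] at hb
      nlinarith [mul_nonneg (mul_nonneg hε.le hc) hv0.le]
    exact ⟨hA, hS, hB, hP, hBbd, hPbd⟩
  obtain ⟨hA, hS, hB, hP, hBbd, hPbd⟩ := key CM hCM
  obtain ⟨hA', hS', hB', hP', hBbd', hPbd'⟩ := key Cs hCs
  set m : ℝ := (CM.card : ℝ) with hm
  set s : ℝ := (Cs.card : ℝ) with hs
  have hm0 : 0 ≤ m := Nat.cast_nonneg _
  have hs0 : 0 ≤ s := Nat.cast_nonneg _
  have hNM : 0 < v0 + ∑ i ∈ CM, V1 i := by linarith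
  have hNMP : 0 < v0 + (∑ i ∈ CM, V1 i) + ∑ i ∈ CM, ∑ j ∈ CM.filter (fun j => i < j), V2 i j := by
    linarith
  have hNS : 0 < v0 + ∑ i ∈ Cs, V1 i := by linarith
  have hNSP : 0 < v0 + (∑ i ∈ Cs, V1 i) + ∑ i ∈ Cs, ∑ j ∈ Cs.filter (fun j => i < j), V2 i j := by
    linarith
  -- Step A: R2 CM ≥ ((2 - ε m)/2) * RMNL CM
  have stepA : ((2 - ε * m) / 2) * RMNL CM ≤ R2 CM := by
    rw [hRMNL, hR2, div_mul_div_comm, div_le_div_iff₀ (by positivity) (by positivity)]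
    nlinarith [mul_nonneg hA hP, mul_nonneg hB hNM.le,
      mul_nonneg hA (by linarith : (0:ℝ) ≤ ε * m * (v0 + ∑ i ∈ CM, V1 i) - 2 * ∑ i ∈ CM, ∑ j ∈ CM.filter (fun j => i < j), V2 i j),
      mul_nonneg (mul_nonneg hε.le hm0) (mul_nonneg hA hP)]
  -- Step B: RMNL Cs ≤ RMNL CM
  have stepB : RMNL Cs ≤ RMNL CM := hCMmax Cs hCs
  -- Step C: R2 Cs ≤ (1 + 2 ε s) * RMNL Cs
  have stepC : R2 Cs ≤ (1 + 2 * ε * s) * RMNL Cs := by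
    rw [hRMNL, hR2, mul_div_assoc', div_le_div_iff₀ (by positivity) (by positivity)]
    nlinarith [mul_nonneg (sub_nonneg.2 hBbd') hNS.le, mul_nonneg hA' hP',
      mul_nonneg (mul_nonneg hε.le hs0) (mul_nonneg hA' hNS.le),
      mul_nonneg (mul_nonneg hε.le hs0) (mul_nonneg hA' hP'),
      mul_nonneg hB' hP']
  have hden : (0:ℝ) < 2 + 4 * ε * s := by positivity
  have stepC' : (2 / (2 + 4 * ε * s)) * R2 Cs ≤ RMNL Cs := by
    rw [div_mul_eq_mul_div, div_le_iff₀ hden]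
    nlinarith
  have hcoef : (0:ℝ) ≤ (2 - ε * m) / 2 := by linarith
  have chain : ((2 - ε * m) / 2) * ((2 / (2 + 4 * ε * s)) * R2 Cs) ≤ R2 CM := by
    calc ((2 - ε * m) / 2) * ((2 / (2 + 4 * ε * s)) * R2 Cs)
        ≤ ((2 - ε * m) / 2) * RMNL Cs := mul_le_mul_of_nonneg_left stepC' hcoef
      _ ≤ ((2 - ε * m) / 2) * RMNL CM := mul_le_mul_of_nonneg_left stepB hcoef
      _ ≤ R2 CM := stepA
  have heq : ((2 - ε * m) / 2) * ((2 / (2 + 4 * ε * s)) * R2 Cs)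
      = ((2 - ε * m) / (2 + 4 * ε * s)) * R2 Cs := by
    have hco : ((2 - ε * m) / 2) * (2 / (2 + 4 * ε * s)) = (2 - ε * m) / (2 + 4 * ε * s) := by
      rw [div_mul_div_comm, mul_comm (2:ℝ) (2 + 4 * ε * s),
        mul_div_mul_right _ _ (two_ne_zero)]
    rw [← mul_assoc, hco]
  rw [ge_iff_le, ← heq]
  exact chain
end

section
/- Let Ĉ be a local optimum of R₂ under single-product additions (i.e., R₂(Ĉ ∪ {i}) ≤ R₂(Ĉ) for all i ∉ Ĉ). Then every product i with r_i > R₂(Ĉ) belongs to Ĉ. Consequently, if Ĉ is the output of a greedy algorithm that terminates only at such a local optimum, and C* is the global maximizer, then {i : r_i > R₂(C*)} ⊆ {i : r_i > R₂(Ĉ)} ⊆ Ĉ, since R₂(Ĉ) ≤ R₂(C*). -/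
open Finset

/-- A local optimum Ĉ of R₂ under single-product additions contains every product whose
revenue exceeds R₂(Ĉ); consequently it contains every product with revenue exceeding the
global optimal revenue R₂(C*). -/
theorem local_optimum_contains_high_revenue {ι : Type*} [DecidableEq ι]
    (W : Finset ι) (r : ι → ℝ) (θ : ι → ι → ℝ) (v0 : ℝ)
    (hv0 : 0 < v0)
    (hr : ∀ i ∈ W, 0 < r i)
    (hθsymm : ∀ i j, θ i j = θ j i)
    (hθnn : ∀ i j, 0 ≤ θ i j)
    (hθdiag : ∀ i ∈ W, 0 < θ i i)
    (rhat : ι → ι → ℝ)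
    (hrhat : ∀ i j, rhat i j = if i = j then r i else r i + r j)
    (R : Finset ι → ℝ)
    (hR : ∀ C, R C = (∑ i ∈ C, ∑ j ∈ C, rhat i j * θ i j) /
        (v0 + ∑ i ∈ C, ∑ j ∈ C, θ i j))
    (Chat : Finset ι) (hChat : Chat ⊆ W)
    (hloc : ∀ i ∈ W, i ∉ Chat → R (insert i Chat) ≤ R Chat)
    (Cs : Finset ι) (hCs : Cs ⊆ W)
    (hmax : ∀ C ⊆ W, R C ≤ R Cs) :
    (∀ i ∈ W, r i > R Chat → i ∈ Chat) ∧
    (∀ i ∈ W, r i > R Cs → i ∈ Chat) := by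
  have key : ∀ i ∈ W, r i > R Chat → i ∈ Chat := by
    intro i hiW hri
    by_contra hiC
    have hle := hloc i hiW hiC
    set N := ∑ a ∈ Chat, ∑ b ∈ Chat, rhat a b * θ a b with hN
    set D := ∑ a ∈ Chat, ∑ b ∈ Chat, θ a b with hD
    have hDnn : 0 ≤ D := Finset.sum_nonneg fun a _ =>
      Finset.sum_nonneg fun b _ => hθnn a b
    have hDpos : 0 < v0 + D := by linarith
    have hsum : ∀ f : ι → ι → ℝ, ∑ a ∈ insert i Chat, ∑ b ∈ insert i Chat, f a b
        = f i i + (∑ j ∈ Chat, f i j) + (∑ j ∈ Chat, f j i)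
          + ∑ a ∈ Chat, ∑ b ∈ Chat, f a b := by
      intro f
      rw [Finset.sum_insert hiC]
      simp only [Finset.sum_insert hiC, Finset.sum_add_distrib]
      ring
    set ΔD : ℝ := θ i i + (∑ j ∈ Chat, θ i j) + (∑ j ∈ Chat, θ j i) with hΔD
    set ΔN : ℝ := rhat i i * θ i i + (∑ j ∈ Chat, rhat i j * θ i j)
        + (∑ j ∈ Chat, rhat j i * θ j i) with hΔN
    have hΔDpos : 0 < ΔD := by
      have h1 : 0 ≤ ∑ j ∈ Chat, θ i j := Finset.sum_nonneg fun j _ => hθnn i j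
      have h2 : 0 ≤ ∑ j ∈ Chat, θ j i := Finset.sum_nonneg fun j _ => hθnn j i
      have := hθdiag i hiW
      rw [hΔD]; linarith
    -- ΔN ≥ r i * ΔD
    have hΔNge : r i * ΔD ≤ ΔN := by
      have h1 : ∑ j ∈ Chat, r i * θ i j ≤ ∑ j ∈ Chat, rhat i j * θ i j := by
        apply Finset.sum_le_sum
        intro j hj
        have hij : i ≠ j := fun h => hiC (h ▸ hj)
        rw [hrhat, if_neg hij]
        have := hr j (hChat hj)
        nlinarith [hθnn i j]
      have h2 : ∑ j ∈ Chat, r i * θ j i ≤ ∑ j ∈ Chat, rhat j i * θ j i := by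
        apply Finset.sum_le_sum
        intro j hj
        have hij : j ≠ i := fun h => hiC (h ▸ hj)
        rw [hrhat, if_neg hij]
        have := hr j (hChat hj)
        nlinarith [hθnn j i]
      have hd : rhat i i = r i := by rw [hrhat]; simp
      rw [hΔN, hΔD, hd]
      have e1 : ∑ j ∈ Chat, r i * θ i j = r i * ∑ j ∈ Chat, θ i j :=
        (Finset.mul_sum _ _ _).symm
      have e2 : ∑ j ∈ Chat, r i * θ j i = r i * ∑ j ∈ Chat, θ j i :=
        (Finset.mul_sum _ _ _).symm
      rw [e1] at h1; rw [e2] at h2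
      linarith
    -- rewrite hle
    rw [hR, hR, hsum (fun a b => rhat a b * θ a b), hsum θ] at hle
    have hD'pos : 0 < v0 + (ΔD + D) := by linarith
    have hle' : (ΔN + N) * (v0 + D) ≤ N * (v0 + (ΔD + D)) := by
      have h := (div_le_div_iff₀ hD'pos hDpos).mp (by
        convert hle using 2 <;> rw [hΔN, hΔD] <;> ring)
      rw [hΔD, hD] at h
      rw [hΔN, hΔD, hN, hD]
      linarith [h]
    have hri' : N < r i * (v0 + D) := by
      rw [hR] at hri
      rw [hN, hD]
      exact (div_lt_iff₀ (by rw [← hD]; exact hDpos)).mp hri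
    nlinarith [mul_pos hΔDpos hDpos]
  refine ⟨key, fun i hiW hri => key i hiW ?_⟩
  have := hmax Chat hChat
  linarith
end

section
/- In the MMC model reduction with a zero-revenue 'snowball' product n+1: (a) adding the snowball never decreases revenue, R_MMC(S) ≤ R_MMC(S ∪ {n+1}) for all S ⊆ {1,…,n}; and (b) if S* maximizes R_MMC over all subsets of {1,…,n+1} and n+1 ∈ S*, then S* \ {n+1} maximizes R_MMNL over all subsets of {1,…,n}, because R_MMNL(S) = R_MMC(S ∪ {n+1}) for all S ⊆ {1,…,n}. -/
open Finset

/-- MMC reduction with a zero-revenue snowball product n+1: adding the snowball never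
decreases MMC revenue; R_MMNL(S) = R_MMC(S ∪ {n+1}); and if S* maximizes R_MMC with
n+1 ∈ S*, then S* \ {n+1} maximizes R_MMNL over subsets of {1,…,n}. -/
theorem mmc_snowball_reduction (n : ℕ) (s v1 v2 : ℕ → ℝ) (a1 a2 : ℝ)
    (hs : ∀ i ∈ Finset.Icc 1 n, 0 < s i)
    (hv1 : ∀ i, i ≤ n → 0 < v1 i)
    (hv2 : ∀ i, i ≤ n → 0 < v2 i)
    (ha1 : 0 ≤ a1) (ha2 : 0 ≤ a2) (hsum : a1 + a2 = 1)
    (RMMNL RMMC : Finset ℕ → ℝ)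
    (hRMMNL : ∀ S, RMMNL S =
      a1 * (∑ i ∈ S, s i * v1 i) / (v1 0 + ∑ j ∈ S, v1 j) +
      a2 * (∑ i ∈ S, s i * v2 i) / (v2 0 + ∑ j ∈ S, v2 j))
    (r V : ℕ → ℝ) (Vp : ℕ → ℕ → ℝ)
    (hr : ∀ i, r i = if i = n + 1 then 0 else s i)
    (hV : ∀ i, V i = if i = n + 1 then 0 else v1 i)
    (hVp : ∀ i j, Vp i j = if i = n + 1 then v2 j else if j = n + 1 then v2 i else 0)
    (hRMMC : ∀ C, RMMC C =
      a1 * (∑ i ∈ C, r i * V i) / (v1 0 + ∑ k ∈ C, V k) +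
      a2 * (∑ i ∈ C, ∑ j ∈ C.filter (fun j => i < j), (r i + r j) * Vp i j) /
        (v2 0 + ∑ k ∈ C, ∑ l ∈ C.filter (fun l => k < l), Vp k l)) :
    (∀ S ⊆ Finset.Icc 1 n, RMMC S ≤ RMMC (insert (n + 1) S)) ∧
    (∀ S ⊆ Finset.Icc 1 n, RMMNL S = RMMC (insert (n + 1) S)) ∧
    (∀ Sstar ⊆ Finset.Icc 1 (n + 1),
      (∀ C ⊆ Finset.Icc 1 (n + 1), RMMC C ≤ RMMC Sstar) → (n + 1) ∈ Sstar →
      ∀ S ⊆ Finset.Icc 1 n, RMMNL S ≤ RMMNL (Sstar.erase (n + 1))) := by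
  -- generic lemma: pair sums over insert (n+1) S reduce to sums of F · (n+1)
  have key2 : ∀ S ⊆ Finset.Icc 1 n, ∀ F : ℕ → ℕ → ℝ,
      (∀ i ∈ S, ∀ j ∈ S, F i j = 0) →
      ∑ i ∈ insert (n+1) S, ∑ j ∈ (insert (n+1) S).filter (fun j => i < j), F i j
        = ∑ i ∈ S, F i (n+1) := by
    intro S hS F hF
    have hmem : ∀ i ∈ S, i ≤ n := fun i hi => (Finset.mem_Icc.mp (hS hi)).2
    have hn1 : (n+1) ∉ S := fun h => by have := hmem _ h; omega
    rw [Finset.sum_insert hn1]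
    have h1 : (insert (n+1) S).filter (fun j => n+1 < j) = ∅ := by
      rw [Finset.filter_eq_empty_iff]
      intro j hj
      rcases Finset.mem_insert.mp hj with h | h
      · omega
      · have := hmem _ h; omega
    rw [h1, Finset.sum_empty, zero_add]
    refine Finset.sum_congr rfl fun i hi => ?_
    have hi' := hmem _ hi
    have hfi : (insert (n+1) S).filter (fun j => i < j)
        = insert (n+1) (S.filter (fun j => i < j)) := by
      rw [Finset.filter_insert, if_pos (by omega)]
    rw [hfi, Finset.sum_insert (fun h => hn1 (Finset.mem_filter.mp h).1),
      Finset.sum_eq_zero (fun j hj => hF i hi j (Finset.mem_filter.mp hj).1), add_zero]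
  -- main equality : RMMNL S = RMMC (insert (n+1) S) for S ⊆ Icc 1 n
  have heq : ∀ S ⊆ Finset.Icc 1 n, RMMNL S = RMMC (insert (n+1) S) := by
    intro S hS
    have hmem : ∀ i ∈ S, i ≤ n := fun i hi => (Finset.mem_Icc.mp (hS hi)).2
    have hne : ∀ i ∈ S, i ≠ n + 1 := fun i hi => by have := hmem _ hi; omega
    have hn1 : (n+1) ∉ S := fun h => (hne _ h) rfl
    have hzero : ∀ i ∈ S, ∀ j ∈ S, Vp i j = 0 := fun i hi j hj => by
      rw [hVp, if_neg (hne i hi), if_neg (hne j hj)]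
    rw [hRMMC, hRMMNL, Finset.sum_insert hn1, Finset.sum_insert hn1,
      key2 S hS _ (fun i hi j hj => by rw [hzero i hi j hj, mul_zero]),
      key2 S hS _ hzero]
    have e1 : ∑ i ∈ S, r i * V i = ∑ i ∈ S, s i * v1 i :=
      Finset.sum_congr rfl fun i hi => by
        rw [hr, hV, if_neg (hne i hi), if_neg (hne i hi)]
    have e2 : ∑ i ∈ S, V i = ∑ i ∈ S, v1 i :=
      Finset.sum_congr rfl fun i hi => by rw [hV, if_neg (hne i hi)]
    have e3 : ∑ i ∈ S, (r i + r (n+1)) * Vp i (n+1) = ∑ i ∈ S, s i * v2 i :=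
      Finset.sum_congr rfl fun i hi => by
        rw [hr i, hr (n+1), hVp, if_neg (hne i hi), if_neg (hne i hi), if_pos rfl,
          if_pos rfl, add_zero]
    have e4 : ∑ i ∈ S, Vp i (n+1) = ∑ i ∈ S, v2 i :=
      Finset.sum_congr rfl fun i hi => by
        rw [hVp, if_neg (hne i hi), if_pos rfl]
    rw [e1, e2, e3, e4, hr, hV, if_pos rfl, if_pos rfl]
    ring
  -- RMMC S ≤ RMMNL S for S ⊆ Icc 1 n
  have hle : ∀ S ⊆ Finset.Icc 1 n, RMMC S ≤ RMMNL S := by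
    intro S hS
    have hmem : ∀ i ∈ S, i ≤ n := fun i hi => (Finset.mem_Icc.mp (hS hi)).2
    have hne : ∀ i ∈ S, i ≠ n + 1 := fun i hi => by have := hmem _ hi; omega
    rw [hRMMC, hRMMNL]
    have e1 : ∑ i ∈ S, r i * V i = ∑ i ∈ S, s i * v1 i :=
      Finset.sum_congr rfl fun i hi => by
        rw [hr, hV, if_neg (hne i hi), if_neg (hne i hi)]
    have e2 : ∑ i ∈ S, V i = ∑ i ∈ S, v1 i :=
      Finset.sum_congr rfl fun i hi => by rw [hV, if_neg (hne i hi)]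
    have e5 : ∑ i ∈ S, ∑ j ∈ S.filter (fun j => i < j), (r i + r j) * Vp i j = 0 :=
      Finset.sum_eq_zero fun i hi => Finset.sum_eq_zero fun j hj => by
        rw [hVp, if_neg (hne i hi), if_neg (hne j (Finset.mem_filter.mp hj).1), mul_zero]
    rw [e1, e2, e5]
    have hnum : 0 ≤ ∑ i ∈ S, s i * v2 i :=
      Finset.sum_nonneg fun i hi => mul_nonneg (hs i (hS hi)).le
        (hv2 i (hmem i hi)).le
    have hden : 0 ≤ v2 0 + ∑ j ∈ S, v2 j :=
      add_nonneg (hv2 0 (Nat.zero_le n)).le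
        (Finset.sum_nonneg fun j hj => (hv2 j (hmem j hj)).le)
    have : 0 ≤ a2 * (∑ i ∈ S, s i * v2 i) / (v2 0 + ∑ j ∈ S, v2 j) :=
      div_nonneg (mul_nonneg ha2 hnum) hden
    simp only [mul_zero, zero_div]
    linarith
  refine ⟨fun S hS => (heq S hS) ▸ hle S hS, heq, ?_⟩
  intro Sstar hSstar hmax hmemstar S hS
  set T := Sstar.erase (n+1) with hT
  have hTsub : T ⊆ Finset.Icc 1 n := by
    intro k hk
    have h1 := Finset.mem_erase.mp hk
    have h2 := Finset.mem_Icc.mp (hSstar h1.2)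
    exact Finset.mem_Icc.mpr ⟨h2.1, by omega⟩
  have hins : insert (n+1) T = Sstar := Finset.insert_erase hmemstar
  have hsub' : insert (n+1) S ⊆ Finset.Icc 1 (n+1) := by
    intro k hk
    rcases Finset.mem_insert.mp hk with h | h
    · subst h; exact Finset.mem_Icc.mpr ⟨by omega, le_refl _⟩
    · have := Finset.mem_Icc.mp (hS h)
      exact Finset.mem_Icc.mpr ⟨this.1, by omega⟩
  calc RMMNL S = RMMC (insert (n+1) S) := heq S hS
    _ ≤ RMMC Sstar := hmax _ hsub'
    _ = RMMC (insert (n+1) T) := by rw [hins]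
    _ = RMMNL T := (heq T hTsub).symm
end

section
/- For the quadratic form built from a simple graph G on m nodes: let G' be G with self-loops removed, A' its adjacency matrix, d the degree vector of G', and Q the (m+1)×(m+1) matrix with Q₀₀ = 0, Q_{0,i} = Q_{i,0} = d_i/2, and Q_{i,j} = −A'_{ij} for i,j ≥ 1. Then for any binary vector x ∈ {0,1}^{m+1} with x₀ = 1, the value Σ_{i,j} Q_{i,j} x_i x_j equals the number of edges in G' across the cut (S, complement of S), where S = {i ≥ 1 : x_i = 1}. Consequently max over binary x of the quadratic form equals the max-cut value of G'. -/
open Finset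

private lemma cut_calc (m : ℕ) (G : SimpleGraph (Fin m)) [DecidableRel G.Adj]
    (Q : Option (Fin m) → Option (Fin m) → ℝ)
    (hQ00 : Q none none = 0)
    (hQ0i : ∀ i, Q none (some i) = (G.degree i : ℝ) / 2)
    (hQi0 : ∀ i, Q (some i) none = (G.degree i : ℝ) / 2)
    (hQij : ∀ i j, Q (some i) (some j) = -(if G.Adj i j then (1 : ℝ) else 0))
    (y : Option (Fin m) → ℝ) (hy0 : y none = 1)
    (hyb : ∀ i, y (some i) = 0 ∨ y (some i) = 1) :
    ∑ i : Option (Fin m), ∑ j : Option (Fin m), Q i j * y i * y j =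
      ∑ i ∈ Finset.univ.filter (fun i : Fin m => y (some i) = 1),
        ∑ j ∈ (Finset.univ.filter (fun i : Fin m => y (some i) = 1))ᶜ,
          (if G.Adj i j then (1 : ℝ) else 0) := by
  set S := Finset.univ.filter (fun i : Fin m => y (some i) = 1) with hS
  have hyS : ∀ i : Fin m, y (some i) = if i ∈ S then 1 else 0 := by
    intro i
    by_cases h : i ∈ S
    · have := (Finset.mem_filter.mp h).2
      simp [h, this]
    · have hne : y (some i) ≠ 1 := fun hc => h (Finset.mem_filter.mpr ⟨Finset.mem_univ i, hc⟩)
      rcases hyb i with h' | h'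
      · simp [h, h']
      · exact absurd h' hne
  have hsum : ∀ f : Fin m → ℝ, ∑ i : Fin m, f i * y (some i) = ∑ i ∈ S, f i := by
    intro f
    simp only [hyS, mul_ite, mul_one, mul_zero]
    rw [Finset.sum_ite_mem, Finset.univ_inter]
  have hdeg : ∀ i : Fin m, (G.degree i : ℝ) = ∑ j : Fin m, (if G.Adj i j then (1:ℝ) else 0) := by
    intro i
    rw [Finset.sum_boole]
    norm_cast
    rw [SimpleGraph.degree]
    congr 1
    ext j
    simp [SimpleGraph.mem_neighborFinset]
  calc ∑ i : Option (Fin m), ∑ j : Option (Fin m), Q i j * y i * y j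
      = (∑ j : Fin m, ((G.degree j : ℝ)/2) * y (some j))
        + ∑ i : Fin m, (((G.degree i : ℝ)/2 + ∑ j ∈ S, -(if G.Adj i j then (1:ℝ) else 0)) * y (some i)) := by
        rw [Fintype.sum_option]
        congr 1
        · rw [Fintype.sum_option, hQ00, hy0]
          simp only [hQ0i, one_mul, mul_one, mul_zero, zero_add]
        · apply Finset.sum_congr rfl
          intro i _
          rw [Fintype.sum_option, hQi0, hy0]
          have : ∑ j : Fin m, Q (some i) (some j) * y (some i) * y (some j)
              = ∑ j ∈ S, -(if G.Adj i j then (1:ℝ) else 0) * y (some i) := by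
            rw [← hsum (fun j => -(if G.Adj i j then (1:ℝ) else 0) * y (some i))]
            apply Finset.sum_congr rfl
            intro j _
            rw [hQij, mul_assoc]
          rw [this, ← Finset.sum_mul]
          ring
    _ = ∑ i ∈ S, ((G.degree i : ℝ)/2) + ∑ i ∈ S, ((G.degree i : ℝ)/2 - ∑ j ∈ S, (if G.Adj i j then (1:ℝ) else 0)) := by
        rw [hsum, hsum]
        congr 1
        apply Finset.sum_congr rfl
        intro i _
        rw [Finset.sum_neg_distrib]
        ring
    _ = ∑ i ∈ S, ((G.degree i : ℝ) - ∑ j ∈ S, (if G.Adj i j then (1:ℝ) else 0)) := by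
        rw [← Finset.sum_add_distrib]
        apply Finset.sum_congr rfl
        intro i _; ring
    _ = ∑ i ∈ S, ∑ j ∈ Sᶜ, (if G.Adj i j then (1:ℝ) else 0) := by
        apply Finset.sum_congr rfl
        intro i _
        rw [hdeg i, ← Finset.sum_add_sum_compl S (fun j => if G.Adj i j then (1:ℝ) else 0)]
        ring

/-- Max-cut reduction: for the matrix Q built from a simple graph G (node 0 represented by
`none`), the quadratic form at any binary vector with x₀ = 1 equals the number of edges of G
across the cut induced by the selected nodes; consequently the maximum of the quadratic form
over binary vectors equals the max-cut value of G. -/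
theorem maxcut_quadratic_form_reduction (m : ℕ) (G : SimpleGraph (Fin m))
    [DecidableRel G.Adj]
    (Q : Option (Fin m) → Option (Fin m) → ℝ)
    (hQ00 : Q none none = 0)
    (hQ0i : ∀ i, Q none (some i) = (G.degree i : ℝ) / 2)
    (hQi0 : ∀ i, Q (some i) none = (G.degree i : ℝ) / 2)
    (hQij : ∀ i j, Q (some i) (some j) = -(if G.Adj i j then (1 : ℝ) else 0)) :
    (∀ y : Option (Fin m) → ℝ, y none = 1 → (∀ i, y (some i) = 0 ∨ y (some i) = 1) →
      ∑ i : Option (Fin m), ∑ j : Option (Fin m), Q i j * y i * y j =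
        ∑ i ∈ Finset.univ.filter (fun i : Fin m => y (some i) = 1),
          ∑ j ∈ (Finset.univ.filter (fun i : Fin m => y (some i) = 1))ᶜ,
            (if G.Adj i j then (1 : ℝ) else 0)) ∧
    (sSup {q : ℝ | ∃ y : Option (Fin m) → ℝ, (∀ i, y i = 0 ∨ y i = 1) ∧
        q = ∑ i : Option (Fin m), ∑ j : Option (Fin m), Q i j * y i * y j} =
      sSup {c : ℝ | ∃ S : Finset (Fin m),
        c = ∑ i ∈ S, ∑ j ∈ Sᶜ, (if G.Adj i j then (1 : ℝ) else 0)}) := by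
  have key := cut_calc m G Q hQ00 hQ0i hQi0 hQij
  refine ⟨key, ?_⟩
  set L : Set ℝ := {q : ℝ | ∃ y : Option (Fin m) → ℝ, (∀ i, y i = 0 ∨ y i = 1) ∧
      q = ∑ i : Option (Fin m), ∑ j : Option (Fin m), Q i j * y i * y j} with hL
  set R : Set ℝ := {c : ℝ | ∃ S : Finset (Fin m),
      c = ∑ i ∈ S, ∑ j ∈ Sᶜ, (if G.Adj i j then (1 : ℝ) else 0)} with hR
  -- R is the range of a function on a finite type, hence finite
  have hRfin : R.Finite := by
    have : R = Set.range (fun S : Finset (Fin m) =>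
        ∑ i ∈ S, ∑ j ∈ Sᶜ, (if G.Adj i j then (1 : ℝ) else 0)) := by
      ext c; simp [hR, Set.range, eq_comm]
    rw [this]
    exact Set.finite_range _
  have hRne : R.Nonempty := ⟨0, ∅, by simp⟩
  have hRbdd : BddAbove R := hRfin.bddAbove
  -- R ⊆ L
  have hRL : R ⊆ L := by
    rintro c ⟨S, rfl⟩
    refine ⟨fun o => match o with | none => 1 | some i => if i ∈ S then 1 else 0, ?_, ?_⟩
    · rintro (_ | i)
      · right; rfl
      · by_cases h : i ∈ S <;> simp [h]
    · rw [key _ rfl (by intro i; by_cases h : i ∈ S <;> simp [h])]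
      have hfil : Finset.univ.filter
          (fun i : Fin m => (if i ∈ S then (1:ℝ) else 0) = 1) = S := by
        ext i
        by_cases h : i ∈ S <;> simp [h]
      simp only [hfil]
  -- every element of L is ≤ some element of R
  have hLR : ∀ q ∈ L, ∃ c ∈ R, q ≤ c := by
    rintro q ⟨y, hyb, rfl⟩
    rcases hyb none with h0 | h0
    · -- y none = 0 : value is nonpositive, bounded by the empty cut
      refine ⟨0, ⟨∅, by simp⟩, ?_⟩
      apply Finset.sum_nonpos
      intro i _
      apply Finset.sum_nonpos
      intro j _
      match i, j with
      | none, _ => rw [h0]; simp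
      | some i, none => rw [h0]; simp
      | some i, some j =>
        rw [hQij, neg_mul, neg_mul, neg_nonpos]
        have h1 : 0 ≤ y (some i) := by rcases hyb (some i) with h | h <;> rw [h] <;> norm_num
        have h2 : 0 ≤ y (some j) := by rcases hyb (some j) with h | h <;> rw [h] <;> norm_num
        have h3 : (0:ℝ) ≤ if G.Adj i j then (1:ℝ) else 0 := by positivity
        exact mul_nonneg (mul_nonneg h3 h1) h2
    · rw [key y h0 (fun i => hyb (some i))]
      exact ⟨_, ⟨_, rfl⟩, le_refl _⟩
  have hLne : L.Nonempty := ⟨_, hRL hRne.choose_spec⟩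
  have hLbdd : BddAbove L := by
    refine ⟨sSup R, fun q hq => ?_⟩
    obtain ⟨c, hcR, hqc⟩ := hLR q hq
    exact hqc.trans (le_csSup hRbdd hcR)
  apply le_antisymm
  · apply csSup_le hLne
    intro q hq
    obtain ⟨c, hcR, hqc⟩ := hLR q hq
    exact hqc.trans (le_csSup hRbdd hcR)
  · exact csSup_le_csSup hLbdd hRne hRL
end
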